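/- Let X_1, ..., X_n be vectors in ℝ^d with ‖X_t‖_2 ≤ L for all t, and let V be a d×d positive definite real matrix. Define V̄_t = V + ∑_{s=1}^t X_s X_sᵀ for 0 ≤ t ≤ n. Then ∑_{t=1}^n min{1, ‖X_t‖²_{V̄_{t-1}^{-1}}} ≤ 2(log det(V̄_n) − log det(V)) ≤ 2(d·log((trace(V) + n L²)/d) − log det(V)). -/

import Mathlib

open Matrix Finset

/-- The weighted norm `‖x‖_A = √(xᵀ A x)`. -/
noncomputable def quadNorm {d : ℕ} (A : Matrix (Fin d) (Fin d) ℝ) (x : Fin d → ℝ) : ℝ :=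
  Real.sqrt (x ⬝ᵥ A *ᵥ x)

/-- The Euclidean (ℓ₂) norm of a vector in ℝ^d. -/
noncomputable def l2norm {d : ℕ} (x : Fin d → ℝ) : ℝ :=
  Real.sqrt (∑ i, x i ^ 2)

/-! By the matrix determinant lemma, `det (A + x xᵀ) = det A * (1 + xᵀ A⁻¹ x)`, so the
log-determinants of the Gram matrices telescope to `∑ log (1 + ‖X_t‖²_{V̄_t⁻¹})`, and
`min 1 u ≤ 2 log (1 + u)` for `u ≥ 0`. For the second bound, AM-GM on the eigenvalues gives
`det V̄_n ≤ (tr V̄_n / d) ^ d`, and `tr V̄_n ≤ tr V + n L²` since `tr (x xᵀ) = ‖x‖²`. -/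

lemma min_one_le_two_mul_log_one_add {u : ℝ} (hu : 0 ≤ u) : min 1 u ≤ 2 * Real.log (1 + u) := by
  rcases le_total u 1 with h | h
  · have hlog : u / (1 + u) ≤ Real.log (1 + u) := by
      have := Real.log_le_sub_one_of_pos (x := (1 + u)⁻¹) (by positivity)
      rw [Real.log_inv] at this
      calc u / (1 + u) = 1 - (1 + u)⁻¹ := by field_simp; ring
        _ ≤ Real.log (1 + u) := by linarith
    have : u / 2 ≤ u / (1 + u) := div_le_div_of_nonneg_left hu (by linarith) (by linarith)
    rw [min_eq_right h]
    linarith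
  · have : Real.log 2 ≤ Real.log (1 + u) := Real.log_le_log (by norm_num) (by linarith)
    rw [min_eq_left h]
    linarith [Real.log_two_gt_d9]

lemma sq_quadNorm {d : ℕ} {A : Matrix (Fin d) (Fin d) ℝ} (hA : A.PosSemidef) (x : Fin d → ℝ) :
    quadNorm A x ^ 2 = x ⬝ᵥ A *ᵥ x :=
  Real.sq_sqrt (by simpa using hA.dotProduct_mulVec_nonneg x)

lemma sq_l2norm {d : ℕ} (x : Fin d → ℝ) : l2norm x ^ 2 = x ⬝ᵥ x := by
  rw [l2norm, Real.sq_sqrt (by positivity)]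
  simp [dotProduct, sq]

namespace Matrix

variable {n : Type*} [Fintype n]

lemma PosDef.add_vecMulVec_self {A : Matrix n n ℝ} (hA : A.PosDef) (x : n → ℝ) :
    (A + vecMulVec x x).PosDef :=
  hA.add_posSemidef (by simpa using posSemidef_vecMulVec_self_star x)

variable [DecidableEq n]

lemma det_add_vecMulVec {R : Type*} [CommRing R] {A : Matrix n n R} (hA : IsUnit A.det)
    (u v : n → R) : (A + vecMulVec u v).det = A.det * (1 + v ⬝ᵥ A⁻¹ *ᵥ u) := by
  rw [vecMulVec_eq Unit, det_add_replicateCol_mul_replicateRow hA, Matrix.mul_assoc,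
    ← replicateCol_mulVec, det_one_add_mul_comm, det_one_add_replicateCol_mul_replicateRow]

lemma PosDef.log_det_add_vecMulVec_self {A : Matrix n n ℝ} (hA : A.PosDef) (x : n → ℝ) :
    Real.log (A + vecMulVec x x).det = Real.log A.det + Real.log (1 + x ⬝ᵥ A⁻¹ *ᵥ x) := by
  have hq : 0 ≤ x ⬝ᵥ A⁻¹ *ᵥ x := by simpa using hA.inv.posSemidef.dotProduct_mulVec_nonneg x
  rw [det_add_vecMulVec hA.det_pos.ne'.isUnit, Real.log_mul hA.det_pos.ne' (by positivity)]

lemma PosDef.log_det_le_of_trace_le {A : Matrix n n ℝ} (hA : A.PosDef) {c : ℝ}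
    (hc : A.trace ≤ c) : Real.log A.det ≤ Fintype.card n * Real.log (c / Fintype.card n) := by
  rcases isEmpty_or_nonempty n with hn | hn
  · simp
  set μ := hA.isHermitian.eigenvalues
  have hμ : ∀ i, 0 < μ i := hA.eigenvalues_pos
  have hcard : (0 : ℝ) < Fintype.card n := by exact_mod_cast Fintype.card_pos
  have hdet : A.det = ∏ i, μ i := by simpa using hA.isHermitian.det_eq_prod_eigenvalues
  have htr : A.trace = ∑ i, μ i := by simpa using hA.isHermitian.trace_eq_sum_eigenvalues
  have hjensen := strictConcaveOn_log_Ioi.concaveOn.le_map_sum (t := univ)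
    (w := fun _ => (Fintype.card n : ℝ)⁻¹) (p := μ) (fun _ _ => by positivity)
    (by simp [hcard.ne']) (fun i _ => hμ i)
  simp only [smul_eq_mul, ← Finset.mul_sum] at hjensen
  have hmono : Real.log ((Fintype.card n : ℝ)⁻¹ * ∑ i, μ i) ≤ Real.log (c / Fintype.card n) := by
    rw [inv_mul_eq_div, ← htr]
    exact Real.log_le_log (div_pos (htr ▸ sum_pos (fun i _ => hμ i) univ_nonempty) hcard)
      (by gcongr)
  rw [hdet, Real.log_prod fun i _ => (hμ i).ne']
  calc ∑ i, Real.log (μ i) = Fintype.card n * ((Fintype.card n : ℝ)⁻¹ * ∑ i, Real.log (μ i)) := by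
        field_simp
    _ ≤ Fintype.card n * Real.log (c / Fintype.card n) := by gcongr; exact hjensen.trans hmono

lemma sum_min_one_le_two_mul_log_det {A : ℕ → Matrix n n ℝ} {x : ℕ → n → ℝ}
    (hA : ∀ t, (A t).PosDef) (hsucc : ∀ t, A (t + 1) = A t + vecMulVec (x t) (x t)) (N : ℕ) :
    ∑ t ∈ range N, min 1 (x t ⬝ᵥ (A t)⁻¹ *ᵥ x t) ≤
      2 * (Real.log (A N).det - Real.log (A 0).det) :=
  calc ∑ t ∈ range N, min 1 (x t ⬝ᵥ (A t)⁻¹ *ᵥ x t)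
      ≤ ∑ t ∈ range N, 2 * Real.log (1 + x t ⬝ᵥ (A t)⁻¹ *ᵥ x t) :=
        sum_le_sum fun t _ => min_one_le_two_mul_log_one_add <| by
          simpa using (hA t).inv.posSemidef.dotProduct_mulVec_nonneg (x t)
    _ = 2 * ∑ t ∈ range N, (Real.log (A (t + 1)).det - Real.log (A t).det) := by
        rw [mul_sum]
        refine sum_congr rfl fun t _ => ?_
        rw [hsucc, (hA t).log_det_add_vecMulVec_self]
        ring
    _ = 2 * (Real.log (A N).det - Real.log (A 0).det) := by
        rw [sum_range_sub fun t => Real.log (A t).det]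

end Matrix

/-- Elliptical potential lemma (Lemma 11 in Abbasi-Yadkori et al., second part). -/
theorem stmt1 {d : ℕ} (n : ℕ) (L : ℝ) (X : ℕ → Fin d → ℝ)
    (hX : ∀ t < n, l2norm (X t) ≤ L)
    (V : Matrix (Fin d) (Fin d) ℝ) (hV : V.PosDef)
    (Vbar : ℕ → Matrix (Fin d) (Fin d) ℝ)
    (hVbar : ∀ t, Vbar t = V + ∑ s ∈ Finset.range t, vecMulVec (X s) (X s)) :
    ∑ t ∈ Finset.range n, min 1 ((quadNorm ((Vbar t)⁻¹) (X t)) ^ 2) ≤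
        2 * (Real.log (Vbar n).det - Real.log V.det) ∧
      2 * (Real.log (Vbar n).det - Real.log V.det) ≤
        2 * ((d : ℝ) * Real.log ((V.trace + n * L ^ 2) / d) - Real.log V.det) := by
  have hV0 : Vbar 0 = V := by simp [hVbar]
  have hsucc : ∀ t, Vbar (t + 1) = Vbar t + vecMulVec (X t) (X t) := fun t => by
    rw [hVbar, hVbar, sum_range_succ, add_assoc]
  have hPD : ∀ t, (Vbar t).PosDef :=
    Nat.rec (hV0 ▸ hV) fun t ih => hsucc t ▸ ih.add_vecMulVec_self (X t)
  have htrace : (Vbar n).trace ≤ V.trace + n * L ^ 2 := by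
    have hsq : ∀ s ∈ range n, X s ⬝ᵥ X s ≤ L ^ 2 := fun s hs => by
      rw [← sq_l2norm]
      exact pow_le_pow_left₀ (Real.sqrt_nonneg _) (hX s (mem_range.mp hs)) 2
    rw [hVbar, trace_add, trace_sum]
    simp_rw [trace_vecMulVec]
    simpa using add_le_add_left (sum_le_card_nsmul _ _ _ hsq) V.trace
  constructor
  · simp_rw [sq_quadNorm (hPD _).inv.posSemidef]
    simpa [hV0] using sum_min_one_le_two_mul_log_det hPD hsucc n
  · have := (hPD n).log_det_le_of_trace_le htrace
    rw [Fintype.card_fin] at this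
    linarith
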